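/- arXiv:2107.02441 — 3 statements merged into one kernel-verified Lean document; each statement's English description precedes it below -/
import Mathlib

section
/- (Step (1) of the null constraint hierarchy, §2.2.) Suppose the Raychaudhuri equation trχ'(v) + (Ω(v)/2)·(trχ(v))² − ω(v)·trχ(v) = −Ω(v)·|χ̂(v)|² holds for all v in an interval I. Then the conformal factor satisfies the linear second-order ODE φ''(v) − ω(v)·Ω(v)·trχ(v)·φ(v) + (1/2)·Ω(v)²·|χ̂(v)|²·φ(v) = 0 for all v ∈ I. -/
/-- (Step (1) of the null constraint hierarchy.)
At a fixed angular point, let `g v` be a smooth curve of positive-definite symmetric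
`2×2` matrices and `Ω v > 0` a smooth null lapse. With
`χ := (2Ω)⁻¹ • g'` (entrywise derivative), `trχ := tr (g⁻¹ χ)`,
`χ̂ := χ - (trχ/2) • g`, `|χ̂|² := tr ((g⁻¹ χ̂) (g⁻¹ χ̂))`, `ω := Ω'/Ω` and
conformal factor `φ := (det g / c₀)^(1/4)`, if the Raychaudhuri equation
`trχ' + (Ω/2) trχ² - ω trχ = -Ω |χ̂|²` holds on an interval `I`, then
`φ'' - ω Ω trχ φ + (1/2) Ω² |χ̂|² φ = 0` on `I`. -/
theorem conformal_factor_second_order_ODE_of_raychaudhuri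
    (I : Set ℝ) (hI : I.OrdConnected)
    (g : ℝ → Matrix (Fin 2) (Fin 2) ℝ) (Ω : ℝ → ℝ) (c₀ : ℝ) (hc₀ : 0 < c₀)
    (hg_smooth : ∀ i j, ContDiff ℝ (⊤ : ℕ∞) (fun v => g v i j))
    (hg_symm : ∀ v, (g v).IsSymm)
    (hg_pos : ∀ v, (g v).PosDef)
    (hΩ_smooth : ContDiff ℝ (⊤ : ℕ∞) Ω)
    (hΩ_pos : ∀ v, 0 < Ω v)
    -- the second fundamental form `χ`, defined by the first variation equation `Dg = 2Ωχ`
    (χ : ℝ → Matrix (Fin 2) (Fin 2) ℝ)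
    (hχ : ∀ v i j, χ v i j = (2 * Ω v)⁻¹ * deriv (fun w => g w i j) v)
    -- its trace `trχ = tr(g⁻¹ χ)`
    (trχ : ℝ → ℝ)
    (htrχ : ∀ v, trχ v = Matrix.trace ((g v)⁻¹ * χ v))
    -- its tracefree part `χ̂ = χ - (trχ/2) g`
    (χhat : ℝ → Matrix (Fin 2) (Fin 2) ℝ)
    (hχhat : ∀ v, χhat v = χ v - (trχ v / 2) • g v)
    -- the squared norm `|χ̂|² = tr((g⁻¹ χ̂)(g⁻¹ χ̂))`
    (normχhatSq : ℝ → ℝ)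
    (hnorm : ∀ v, normχhatSq v
      = Matrix.trace ((g v)⁻¹ * χhat v * ((g v)⁻¹ * χhat v)))
    -- `ω = D log Ω`
    (ω : ℝ → ℝ) (hω : ∀ v, ω v = deriv Ω v / Ω v)
    -- the conformal factor `φ = (det g / c₀)^(1/4)`
    (φ : ℝ → ℝ) (hφ : ∀ v, φ v = (Matrix.det (g v) / c₀) ^ ((1 : ℝ)/4))
    -- the Raychaudhuri equation on `I`
    (hRay : ∀ v ∈ I,
      deriv trχ v + (Ω v / 2) * (trχ v) ^ 2 - ω v * trχ v
        = - Ω v * normχhatSq v) :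
    -- conclusion: the linear second-order ODE for `φ` on `I`
    ∀ v ∈ I,
      deriv (deriv φ) v - ω v * Ω v * trχ v * φ v
        + (1/2) * (Ω v) ^ 2 * normχhatSq v * φ v = 0 := by
  -- basic differentiability facts
  have hdiff : ∀ i j, Differentiable ℝ (fun v => g v i j) :=
    fun i j => (hg_smooth i j).differentiable (by simp)
  have hdiff' : ∀ i j, Differentiable ℝ (deriv (fun v => g v i j)) := by
    intro i j
    have h2 : ContDiff ℝ ((⊤ : ℕ∞) : WithTop ℕ∞) (fun v => g v i j) :=
      (hg_smooth i j).of_le (by simp)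
    exact ((contDiff_infty_iff_deriv.mp h2).2).differentiable (by simp)
  have hΩdiff : Differentiable ℝ Ω := hΩ_smooth.differentiable (by simp)
  -- the determinant and its derivative
  set D : ℝ → ℝ := fun v => g v 0 0 * g v 1 1 - g v 0 1 * g v 1 0 with hDdef
  set E : ℝ → ℝ := fun v =>
    (deriv (fun w => g w 0 0) v * g v 1 1 + g v 0 0 * deriv (fun w => g w 1 1) v)
      - (deriv (fun w => g w 0 1) v * g v 1 0 + g v 0 1 * deriv (fun w => g w 1 0) v)
    with hEdef
  have hdet : ∀ v, Matrix.det (g v) = D v := fun v => by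
    simp [Matrix.det_fin_two, hDdef]
  have hDpos : ∀ v, 0 < D v := fun v => by rw [← hdet]; exact (hg_pos v).det_pos
  have hDder : ∀ v, HasDerivAt D (E v) v := by
    intro v
    exact (((hdiff 0 0 v).hasDerivAt.mul (hdiff 1 1 v).hasDerivAt).sub
      (((hdiff 0 1 v).hasDerivAt.mul (hdiff 1 0 v).hasDerivAt)))
  have hDdiff : Differentiable ℝ D := fun v => (hDder v).differentiableAt
  have hEdiff : Differentiable ℝ E := by
    apply Differentiable.sub
    · exact ((hdiff' 0 0).mul (hdiff 1 1)).add ((hdiff 0 0).mul (hdiff' 1 1))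
    · exact ((hdiff' 0 1).mul (hdiff 1 0)).add ((hdiff 0 1).mul (hdiff' 1 0))
  -- explicit scalar formula for trχ
  have htrχ' : ∀ v, trχ v = (2 * Ω v)⁻¹ * (E v / D v) := by
    intro v
    have hΩv : Ω v ≠ 0 := (hΩ_pos v).ne'
    have hDv : D v ≠ 0 := (hDpos v).ne'
    have hDv' : Matrix.det (g v) = D v := hdet v
    rw [htrχ, Matrix.inv_def, Matrix.adjugate_fin_two, Ring.inverse_eq_inv]
    simp only [Matrix.smul_mul, Matrix.trace_smul, Matrix.trace_fin_two,
      Matrix.mul_apply, Fin.sum_univ_two, Matrix.of_apply, Matrix.cons_val',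
      Matrix.cons_val_zero, Matrix.cons_val_one, Matrix.head_cons, Matrix.head_fin_const,
      Matrix.empty_val', Matrix.cons_val_fin_one, smul_eq_mul, hχ, hDv']
    field_simp
    ring
  have htrχdiff : Differentiable ℝ trχ := by
    have : trχ = fun v => (2 * Ω v)⁻¹ * (E v / D v) := funext htrχ'
    rw [this]
    refine Differentiable.mul ?_ (hEdiff.div hDdiff fun v => (hDpos v).ne')
    exact Differentiable.inv (differentiable_const 2 |>.mul hΩdiff)
      fun v => by have := hΩ_pos v; positivity
  -- first derivative of φ
  have hφeq : φ = fun v => (D v / c₀) ^ ((1 : ℝ)/4) := by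
    funext v; rw [hφ, hdet]
  have hφder : ∀ v, HasDerivAt φ ((1/2) * Ω v * trχ v * φ v) v := by
    intro v
    have hx : (0:ℝ) < D v / c₀ := div_pos (hDpos v) hc₀
    have h1 : HasDerivAt (fun w => D w / c₀) (E v / c₀) v := (hDder v).div_const c₀
    have h2 : HasDerivAt (fun x : ℝ => x ^ ((1:ℝ)/4))
        (((1:ℝ)/4) * (D v / c₀) ^ ((1:ℝ)/4 - 1)) (D v / c₀) :=
      Real.hasDerivAt_rpow_const (Or.inl hx.ne')
    have h3 := h2.comp v h1
    rw [hφeq]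
    refine HasDerivAt.congr_deriv h3 ?_
    have hrw : (D v / c₀) ^ ((1:ℝ)/4 - 1) = (D v / c₀) ^ ((1:ℝ)/4) / (D v / c₀) := by
      rw [Real.rpow_sub hx, Real.rpow_one]
    simp only [htrχ' v, hrw]
    have hΩv : Ω v ≠ 0 := (hΩ_pos v).ne'
    have hDv : D v ≠ 0 := (hDpos v).ne'
    field_simp
    ring
  have hderivφ : deriv φ = fun v => (1/2) * Ω v * trχ v * φ v :=
    funext fun v => (hφder v).deriv
  -- conclusion
  intro v hv
  have hray := hRay v hv
  have hΩv : Ω v ≠ 0 := (hΩ_pos v).ne'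
  have hωv : deriv Ω v = ω v * Ω v := by rw [hω]; field_simp
  have hΩd : HasDerivAt Ω (deriv Ω v) v := (hΩdiff v).hasDerivAt
  have htd : HasDerivAt trχ (deriv trχ v) v := (htrχdiff v).hasDerivAt
  have H : HasDerivAt (fun w => (1/2) * Ω w * trχ w * φ w)
      ((((1/2) * deriv Ω v * trχ v + (1/2) * Ω v * deriv trχ v) * φ v)
        + ((1/2) * Ω v * trχ v) * ((1/2) * Ω v * trχ v * φ v)) v := by
    exact ((hΩd.const_mul (1/2 : ℝ)).mul htd).mul (hφder v)
  have h2nd : deriv (deriv φ) v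
      = (((1/2) * deriv Ω v * trχ v + (1/2) * Ω v * deriv trχ v) * φ v)
        + ((1/2) * Ω v * trχ v) * ((1/2) * Ω v * trχ v * φ v) := by
    rw [hderivφ]; exact H.deriv
  rw [h2nd, hωv]
  linear_combination (Ω v * φ v / 2) * hray
end

section
/- (Conservation of the charge Q₁ under the linearized null constraint equations, §3.3, eq. (3.1).) Under the linearized first variation and Raychaudhuri equations, the charge Q₁(r) := (r/2)·(a(r) − (4/r)·Ω̇(r)) + φ̇(r)/r is constant on I. -/
/-! Away from `r = 0` the charge is `Q₁ = r a / 2 - 2 Ω̇ + φ̇ / r`. The Raychaudhuri equation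
gives `(r a / 2 - 2 Ω̇)' = -a / 2` and the first variation equation gives `(φ̇ / r)' = a / 2`,
so `Q₁' = 0` on `I`; a function with vanishing derivative on an interval is constant there. -/

theorem Convex.eq_of_hasDerivWithinAt_eq_zero {E : Type*} [NormedAddCommGroup E]
    [NormedSpace ℝ E] {s : Set ℝ} {f : ℝ → E} (hs : Convex ℝ s)
    (hf : ∀ x ∈ s, HasDerivWithinAt f 0 s x) {x y : ℝ} (hx : x ∈ s) (hy : y ∈ s) :
    f x = f y := by
  have h := hs.norm_image_sub_le_of_norm_hasDerivWithin_le hf (C := 0) (fun _ _ => by simp) hy hx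
  rwa [zero_mul, norm_le_zero_iff, sub_eq_zero] at h

noncomputable def chargeQ1 (φdot Ωdot a : ℝ → ℝ) (r : ℝ) : ℝ :=
  (r / 2) * (a r - (4 / r) * Ωdot r) + φdot r / r

theorem hasDerivAt_chargeQ1 {φdot Ωdot a : ℝ → ℝ} {Ωdot' r : ℝ} (hr : r ≠ 0)
    (hΩdot : HasDerivAt Ωdot Ωdot' r)
    (hfirstvar : HasDerivAt φdot ((r / 2) * a r + φdot r / r) r)
    (hray : HasDerivAt a ((4 / r) * Ωdot' - (2 / r) * a r) r) :
    HasDerivAt (chargeQ1 φdot Ωdot a) 0 r := by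
  have h : HasDerivAt (chargeQ1 φdot Ωdot a)
      (1 / 2 * (a r - 4 / r * Ωdot r)
        + r / 2 * ((4 / r * Ωdot' - 2 / r * a r)
          - ((0 * r - 4 * 1) / r ^ 2 * Ωdot r + 4 / r * Ωdot'))
        + ((r / 2 * a r + φdot r / r) * r - φdot r * 1) / r ^ 2) r :=
    ((hasDerivAt_id' r).div_const 2).mul
      (hray.sub (((hasDerivAt_const r 4).div (hasDerivAt_id' r) hr).mul hΩdot))
      |>.add (hfirstvar.div (hasDerivAt_id' r) hr)
  refine h.congr_deriv ?_
  field_simp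
  ring

/-- (Conservation of the charge `Q₁` under the linearized null
constraint equations at Minkowski.) Let `I ⊆ (0,∞)` be an interval and let
`φ̇, Ω̇, a : ℝ → ℝ` be (smooth) functions satisfying on `I` the linearized first
variation equation `φ̇'(r) = (r/2)·a(r) + φ̇(r)/r` and the linearized Raychaudhuri
equation `a'(r) + (2/r)·a(r) = (4/r)·Ω̇'(r)`. Then the charge
`Q₁(r) := (r/2)·(a(r) - (4/r)·Ω̇(r)) + φ̇(r)/r` is constant on `I`. -/
theorem charge_Q1_conserved
    (I : Set ℝ) (hI : I.OrdConnected) (hIpos : I ⊆ Set.Ioi (0 : ℝ))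
    (φdot Ωdot a Ωdot' : ℝ → ℝ)
    (hΩdot : ∀ r ∈ I, HasDerivAt Ωdot (Ωdot' r) r)
    -- linearized first variation equation `φ̇'(r) = (r/2)·a(r) + φ̇(r)/r`
    (hfirstvar : ∀ r ∈ I, HasDerivAt φdot ((r / 2) * a r + φdot r / r) r)
    -- linearized Raychaudhuri equation `a'(r) + (2/r)·a(r) = (4/r)·Ω̇'(r)`
    (hray : ∀ r ∈ I, HasDerivAt a ((4 / r) * Ωdot' r - (2 / r) * a r) r) :
    ∀ r ∈ I, ∀ s ∈ I,
      (r / 2) * (a r - (4 / r) * Ωdot r) + φdot r / r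
        = (s / 2) * (a s - (4 / s) * Ωdot s) + φdot s / s := by
  intro r hr s hs
  refine hI.convex.eq_of_hasDerivWithinAt_eq_zero (f := chargeQ1 φdot Ωdot a)
    (fun x hx => ?_) hr hs
  exact (hasDerivAt_chargeQ1 (hIpos hx).ne' (hΩdot x hx) (hfirstvar x hx)
    (hray x hx)).hasDerivWithinAt
end

section
/- (Representation formula for the linearized conformal factor, §3.4, eq. (3.2).) Suppose [1, r] ⊆ I. Then under the linearized first variation and Raychaudhuri equations, φ̇(r) = r·φ̇(1) + 2·∫₁^r Ω̇(r') dr' + ((r−1)/2)·(a(1) − 4·Ω̇(1)). -/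
/-!
The Raychaudhuri equation says `(s² a)' = 4 s Ω̇'`, so `s² a - 4 s Ω̇ + 4 ∫ Ω̇` is a constant `c`.
Substituting this first integral for `a` in the first variation equation shows that
`(φ̇ - 2 ∫ Ω̇ + c / 2) / s` has vanishing derivative.
-/

open Set intervalIntegral

theorem eq_of_hasDerivAt_zero {f : ℝ → ℝ} {a b : ℝ} (hab : a ≤ b)
    (hf : ContinuousOn f (Icc a b)) (hf' : ∀ x ∈ Ioo a b, HasDerivAt f 0 x) : f b = f a := by
  have h := integral_eq_sub_of_hasDerivAt_of_le hab hf hf' intervalIntegrable_const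
  simp only [integral_zero] at h
  linarith

theorem continuousOn_integral_of_continuousOn {f : ℝ → ℝ} {a b : ℝ} (hab : a ≤ b)
    (hf : ContinuousOn f (Icc a b)) : ContinuousOn (fun s => ∫ t in a..s, f t) (Icc a b) := by
  rw [← uIcc_of_le hab] at hf ⊢
  exact continuousOn_primitive_interval (hf.integrableOn_compact isCompact_uIcc)

theorem hasDerivAt_integral_of_continuousOn {f : ℝ → ℝ} {a b x : ℝ}
    (hf : ContinuousOn f (Icc a b)) (hx : x ∈ Ioo a b) :
    HasDerivAt (fun s => ∫ t in a..s, f t) (f x) x :=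
  integral_hasDerivAt_right
    ((hf.mono (Icc_subset_Icc_right hx.2.le)).intervalIntegrable_of_Icc hx.1.le)
    ((hf.mono Ioo_subset_Icc_self).stronglyMeasurableAtFilter isOpen_Ioo x hx)
    (hf.continuousAt (Icc_mem_nhds hx.1 hx.2))

section LinearizedNullConstraints

variable {φ Ω Ω' a : ℝ → ℝ} {r₀ r : ℝ}

theorem raychaudhuri_first_integral (h₀ : 0 < r₀) (hle : r₀ ≤ r)
    (hΩ : ∀ s ∈ Icc r₀ r, HasDerivAt Ω (Ω' s) s)
    (hray : ∀ s ∈ Icc r₀ r, HasDerivAt a ((4 / s) * Ω' s - (2 / s) * a s) s) :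
    r ^ 2 * a r - 4 * r * Ω r + 4 * ∫ s in r₀..r, Ω s = r₀ ^ 2 * a r₀ - 4 * r₀ * Ω r₀ := by
  rw [← uIcc_of_le hle] at hΩ hray
  have hG : ∀ s ∈ uIcc r₀ r,
      HasDerivAt (fun s => s ^ 2 * a s - 4 * s * Ω s) (-4 * Ω s) s := by
    intro s hs
    have hs₀ : s ≠ 0 := (h₀.trans_le (uIcc_of_le hle ▸ hs).1).ne'
    refine (((hasDerivAt_pow 2 s).fun_mul (hray s hs)).fun_sub
      (((hasDerivAt_id' s).const_mul 4).fun_mul (hΩ s hs))).congr_deriv ?_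
    field_simp
    ring
  have hint : IntervalIntegrable Ω MeasureTheory.volume r₀ r :=
    (HasDerivAt.continuousOn hΩ).intervalIntegrable
  have hFTC := integral_eq_sub_of_hasDerivAt hG (hint.const_mul (-4))
  rw [integral_const_mul] at hFTC
  linarith

theorem linearized_conformal_factor_eq (h₀ : 0 < r₀) (hle : r₀ ≤ r)
    (hΩ : ∀ s ∈ Icc r₀ r, HasDerivAt Ω (Ω' s) s)
    (hfirstvar : ∀ s ∈ Icc r₀ r, HasDerivAt φ ((s / 2) * a s + φ s / s) s)
    (hray : ∀ s ∈ Icc r₀ r, HasDerivAt a ((4 / s) * Ω' s - (2 / s) * a s) s) :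
    φ r = r / r₀ * φ r₀ + 2 * (∫ s in r₀..r, Ω s) + (r - r₀) / 2 * (r₀ * a r₀ - 4 * Ω r₀) := by
  set W : ℝ → ℝ := fun s => ∫ t in r₀..s, Ω t
  set c := r₀ ^ 2 * a r₀ - 4 * r₀ * Ω r₀ with hc
  have hne : ∀ s ∈ Icc r₀ r, s ≠ 0 := fun s hs => (h₀.trans_le hs.1).ne'
  have hΩc : ContinuousOn Ω (Icc r₀ r) := HasDerivAt.continuousOn hΩ
  have hWc : ContinuousOn W (Icc r₀ r) := continuousOn_integral_of_continuousOn hle hΩc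
  have hconserved : ∀ s ∈ Icc r₀ r, s ^ 2 * a s - 4 * s * Ω s + 4 * W s = c := fun s hs =>
    raychaudhuri_first_integral h₀ hs.1
      (fun t ht => hΩ t ⟨ht.1, ht.2.trans hs.2⟩) (fun t ht => hray t ⟨ht.1, ht.2.trans hs.2⟩)
  have hΦc : ContinuousOn (fun s => (φ s - 2 * W s + c / 2) / s) (Icc r₀ r) :=
    (((HasDerivAt.continuousOn hfirstvar).sub (continuousOn_const.mul hWc)).add
      continuousOn_const).div continuousOn_id hne
  have hΦ' : ∀ s ∈ Ioo r₀ r, HasDerivAt (fun s => (φ s - 2 * W s + c / 2) / s) 0 s := by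
    intro s hs
    have hsI : s ∈ Icc r₀ r := Ioo_subset_Icc_self hs
    have hs₀ : s ≠ 0 := hne s hsI
    have hd := (((hfirstvar s hsI).fun_sub
      ((hasDerivAt_integral_of_continuousOn hΩc hs).const_mul 2)).add_const (c / 2)).fun_div
      (hasDerivAt_id' s) hs₀
    refine hd.congr_deriv ?_
    field_simp
    linear_combination hconserved s hsI
  have hconst := eq_of_hasDerivAt_zero hle hΦc hΦ'
  simp only [W, integral_same, mul_zero, sub_zero] at hconst
  rw [div_eq_div_iff (hne r ⟨hle, le_rfl⟩) h₀.ne'] at hconst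
  field_simp
  linear_combination 2 * hconst + (r₀ - r) * hc

end LinearizedNullConstraints

theorem representation_formula_linearized_conformal_factor_general
    (I : Set ℝ)
    (φdot Ωdot a Ωdot' : ℝ → ℝ)
    (hΩdot : ∀ r ∈ I, HasDerivAt Ωdot (Ωdot' r) r)
    -- linearized first variation equation `φ̇'(r) = (r/2)·a(r) + φ̇(r)/r`
    (hfirstvar : ∀ r ∈ I, HasDerivAt φdot ((r / 2) * a r + φdot r / r) r)
    -- linearized Raychaudhuri equation `a'(r) + (2/r)·a(r) = (4/r)·Ω̇'(r)`
    (hray : ∀ r ∈ I, HasDerivAt a ((4 / r) * Ωdot' r - (2 / r) * a r) r)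
    (r : ℝ) (hr : 1 ≤ r) (hIcc : Set.Icc (1 : ℝ) r ⊆ I) :
    φdot r = r * φdot 1 + 2 * (∫ r' in (1 : ℝ)..r, Ωdot r')
      + ((r - 1) / 2) * (a 1 - 4 * Ωdot 1) := by
  simpa using linearized_conformal_factor_eq one_pos hr (fun s hs => hΩdot s (hIcc hs))
    (fun s hs => hfirstvar s (hIcc hs)) (fun s hs => hray s (hIcc hs))

/-- (Representation formula for the linearized conformal factor,
eq. (3.2).) Let `I ⊆ (0,∞)` be an interval and let `φ̇, Ω̇, a : ℝ → ℝ` satisfy on `I`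
the linearized first variation equation `φ̇'(r) = (r/2)·a(r) + φ̇(r)/r` and the
linearized Raychaudhuri equation `a'(r) + (2/r)·a(r) = (4/r)·Ω̇'(r)`. If `[1,r] ⊆ I`,
then `φ̇(r) = r·φ̇(1) + 2·∫₁^r Ω̇(r') dr' + ((r-1)/2)·(a(1) - 4·Ω̇(1))`. -/
theorem representation_formula_linearized_conformal_factor
    (I : Set ℝ) (hI : I.OrdConnected) (hIpos : I ⊆ Set.Ioi (0 : ℝ))
    (φdot Ωdot a Ωdot' : ℝ → ℝ)
    (hΩdot : ∀ r ∈ I, HasDerivAt Ωdot (Ωdot' r) r)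
    -- linearized first variation equation `φ̇'(r) = (r/2)·a(r) + φ̇(r)/r`
    (hfirstvar : ∀ r ∈ I, HasDerivAt φdot ((r / 2) * a r + φdot r / r) r)
    -- linearized Raychaudhuri equation `a'(r) + (2/r)·a(r) = (4/r)·Ω̇'(r)`
    (hray : ∀ r ∈ I, HasDerivAt a ((4 / r) * Ωdot' r - (2 / r) * a r) r)
    (r : ℝ) (hr : 1 ≤ r) (hIcc : Set.Icc (1 : ℝ) r ⊆ I) :
    φdot r = r * φdot 1 + 2 * (∫ r' in (1 : ℝ)..r, Ωdot r')
      + ((r - 1) / 2) * (a 1 - 4 * Ωdot 1) :=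
  representation_formula_linearized_conformal_factor_general I φdot Ωdot a Ωdot' hΩdot hfirstvar
    hray r hr hIcc
end
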